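/- arXiv:1806.07337 — 2 statements merged into one kernel-verified Lean document; each statement's English description precedes it below -/
import Mathlib

section
/- Let ρ be a positive semidefinite n×n complex matrix, let Π₁, …, Π_m be positive semidefinite n×n complex matrices with Σₖ Πₖ = 1 (the identity matrix) and Re(Tr(ρΠₖ)) > 0 for each k, and let L₁, …, L_p be Hermitian n×n complex matrices. Then for every real vector u ∈ ℝᵖ, Σₖ (Re Tr(ρΠₖ(Σᵢ uᵢLᵢ)))² / Re(Tr(ρΠₖ)) ≤ Σᵢⱼ uᵢuⱼ Re(Tr(ρLᵢLⱼ)). -/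
/-!
Put `T = ∑ i, uᵢ • Lᵢ`. For each outcome `k`, positivity of
`Re Tr ((1 + tT) ρ (1 + tT) Pₖ)` for all real `t` is a nonnegative quadratic in `t`, and its
discriminant gives the Cauchy–Schwarz bound `Re Tr(ρPₖT)² ≤ Re Tr(ρPₖ) · Re Tr(TρTPₖ)`.
Summing over `k` with `∑ Pₖ = 1` leaves `Re Tr(ρT²)`, which expands to the quantum form.
-/

open Matrix
open scoped ComplexOrder

namespace Matrix

variable {𝕜 n : Type*} [RCLike 𝕜] [Fintype n]

open scoped MatrixOrder in
theorem PosSemidef.trace_mul_nonneg {A B : Matrix n n 𝕜} (hA : A.PosSemidef)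
    (hB : B.PosSemidef) : 0 ≤ (A * B).trace := by
  classical
  obtain ⟨hsqrt, hsqrt_sq⟩ : (CFC.sqrt B)ᴴ = CFC.sqrt B ∧ CFC.sqrt B * CFC.sqrt B = B :=
    ⟨(CFC.sqrt_nonneg B).posSemidef.1, CFC.sqrt_mul_sqrt_self B hB.nonneg⟩
  rw [← hsqrt_sq, ← Matrix.mul_assoc, trace_mul_cycle]
  simpa [hsqrt] using (hA.mul_mul_conjTranspose_same (CFC.sqrt B)).trace_nonneg

theorem PosSemidef.re_trace_mul_nonneg {A B : Matrix n n 𝕜} (hA : A.PosSemidef)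
    (hB : B.PosSemidef) : 0 ≤ RCLike.re (A * B).trace :=
  (RCLike.nonneg_iff.mp (hA.trace_mul_nonneg hB)).1

theorem re_trace_mul_mul_comm_of_isHermitian {A B C : Matrix n n 𝕜} (hA : A.IsHermitian)
    (hB : B.IsHermitian) (hC : C.IsHermitian) :
    RCLike.re (A * B * C).trace = RCLike.re (A * C * B).trace := by
  rw [← RCLike.conj_re, starRingEnd_apply, ← trace_conjTranspose, conjTranspose_mul,
    conjTranspose_mul, hA.eq, hB.eq, hC.eq, ← Matrix.mul_assoc, trace_mul_cycle]

theorem re_trace_mul_sum_smul_mul_sum_smul {ι : Type*} [Fintype ι] (ρ : Matrix n n 𝕜)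
    (L : ι → Matrix n n 𝕜) (u : ι → ℝ) :
    RCLike.re (ρ * (∑ i, (u i : 𝕜) • L i) * ∑ j, (u j : 𝕜) • L j).trace =
      ∑ i, ∑ j, u i * u j * RCLike.re (ρ * L i * L j).trace := by
  simp only [Matrix.sum_mul, Matrix.mul_smul, Matrix.smul_mul, trace_sum,
    trace_smul, map_sum, smul_eq_mul, RCLike.re_ofReal_mul, Finset.mul_sum]
  rw [Finset.sum_comm]
  exact Finset.sum_congr rfl fun _ _ => Finset.sum_congr rfl fun _ _ => by ring

variable [DecidableEq n]

theorem re_trace_conj_one_add_smul_mul {ρ Q T : Matrix n n 𝕜} (hρ : ρ.IsHermitian)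
    (hQ : Q.IsHermitian) (hT : T.IsHermitian) (t : ℝ) :
    RCLike.re ((1 + t • T) * ρ * (1 + t • T) * Q).trace =
      RCLike.re (T * ρ * T * Q).trace * (t * t) + 2 * RCLike.re (ρ * Q * T).trace * t +
        RCLike.re (ρ * Q).trace := by
  have hcycle : RCLike.re (T * ρ * Q).trace = RCLike.re (ρ * Q * T).trace := by
    rw [trace_mul_cycle ρ Q T]
  have hswap := re_trace_mul_mul_comm_of_isHermitian hρ hT hQ
  simp only [Matrix.add_mul, Matrix.mul_add, Matrix.one_mul, Matrix.mul_one, Matrix.smul_mul,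
    Matrix.mul_smul, trace_add, trace_smul, map_add, RCLike.smul_re, hcycle, hswap]
  ring

theorem sq_re_trace_mul_le {ρ Q T : Matrix n n 𝕜} (hρ : ρ.PosSemidef) (hQ : Q.PosSemidef)
    (hT : T.IsHermitian) :
    RCLike.re (ρ * Q * T).trace ^ 2 ≤
      RCLike.re (ρ * Q).trace * RCLike.re (T * ρ * T * Q).trace := by
  have hS : ∀ t : ℝ, (1 + t • T).IsHermitian := fun t =>
    isHermitian_one.add (hT.smul (IsSelfAdjoint.all t))
  have hquad : ∀ t : ℝ, 0 ≤ RCLike.re (T * ρ * T * Q).trace * (t * t) +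
      2 * RCLike.re (ρ * Q * T).trace * t + RCLike.re (ρ * Q).trace := fun t => by
    rw [← re_trace_conj_one_add_smul_mul hρ.1 hQ.1 hT t]
    have hconj := hρ.mul_mul_conjTranspose_same (1 + t • T)
    rw [(hS t).eq] at hconj
    exact hconj.re_trace_mul_nonneg hQ
  have hdisc := discrim_le_zero hquad
  rw [discrim] at hdisc
  linarith

theorem sum_re_trace_mul_eq_of_sum_eq_one {ι : Type*} [Fintype ι] {P : ι → Matrix n n 𝕜}
    (hP : ∑ k, P k = 1) (X : Matrix n n 𝕜) :
    ∑ k, RCLike.re (X * P k).trace = RCLike.re X.trace := by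
  rw [← map_sum, ← trace_sum, ← Matrix.mul_sum, hP, Matrix.mul_one]

end Matrix

/-- Helstrom Cramér–Rao bound: for a POVM `{Pₖ}` (PSD matrices summing to the
identity) with all outcome probabilities positive, the classical Fisher
quadratic form is bounded by the quantum Fisher quadratic form. -/
theorem helstrom_cramer_rao_bound
    {n m p : ℕ} (ρ : Matrix (Fin n) (Fin n) ℂ)
    (P : Fin m → Matrix (Fin n) (Fin n) ℂ)
    (L : Fin p → Matrix (Fin n) (Fin n) ℂ)
    (hρ : ρ.PosSemidef) (hP : ∀ k, (P k).PosSemidef)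
    (hsum : ∑ k, P k = 1)
    (hpos : ∀ k, 0 < (Matrix.trace (ρ * P k)).re)
    (hL : ∀ i, (L i).IsHermitian) (u : Fin p → ℝ) :
    ∑ k, (Matrix.trace (ρ * P k * ∑ i, (u i : ℂ) • L i)).re ^ 2 /
        (Matrix.trace (ρ * P k)).re ≤
      ∑ i, ∑ j, u i * u j * (Matrix.trace (ρ * L i * L j)).re := by
  set T := ∑ i, (u i : ℂ) • L i
  have hT : T.IsHermitian :=
    isSelfAdjoint_sum _ fun i _ => (hL i).smul (Complex.conj_ofReal (u i))
  calc ∑ k, (ρ * P k * T).trace.re ^ 2 / (ρ * P k).trace.re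
      ≤ ∑ k, (T * ρ * T * P k).trace.re := Finset.sum_le_sum fun k _ =>
        (div_le_iff₀ (hpos k)).2 <| mul_comm (ρ * P k).trace.re _ ▸
          sq_re_trace_mul_le hρ (hP k) hT
    _ = (ρ * T * T).trace.re := (sum_re_trace_mul_eq_of_sum_eq_one hsum _).trans
        (congrArg _ (trace_mul_cycle ρ T T).symm)
    _ = ∑ i, ∑ j, u i * u j * (ρ * L i * L j).trace.re :=
        re_trace_mul_sum_smul_mul_sum_smul ρ L u
end

section
/- Let ρ and Π be positive semidefinite n×n complex matrices with Πρ = 0, and let L₁, …, L_p be Hermitian n×n complex matrices such that Re(Tr(ρLⱼΠLⱼ)) ≠ 0 for every j. Then the following are equivalent: (a) there exist real numbers η_{ij} such that Π Lᵢ ρ = η_{ij} Π Lⱼ ρ for all i, j; (b) for all i, j the number Tr(ρLᵢΠLⱼ) is real and |Tr(ρLᵢΠLⱼ)|² = Re(Tr(ρLᵢΠLᵢ)) · Re(Tr(ρLⱼΠLⱼ)). -/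
open Matrix
open scoped ComplexOrder

/-!
Factor `P = AᴴA` and `ρ = BᴴB` and put `Xₖ = A Lₖ Bᴴ`. Then `Tr(ρ Lᵢ P Lⱼ) = Tr(Xᵢᴴ Xⱼ)` is the
Frobenius inner product of `Xᵢ` and `Xⱼ`, and `P M ρ = Aᴴ (A M Bᴴ) B` vanishes iff `A M Bᴴ` does, so
`P Lᵢ ρ = η P Lⱼ ρ` iff `Xᵢ = η Xⱼ`. Condition (b) is realness of `⟨Xᵢ, Xⱼ⟩` plus equality in
Cauchy–Schwarz, and for `c = Re⟨Xᵢ, Xⱼ⟩ / ‖Xⱼ‖²` this equality says exactly `‖Xᵢ - c Xⱼ‖² = 0`.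
-/

namespace Matrix

variable {k l m n : Type*} [Fintype k] [Fintype l] [Fintype m] [Fintype n]

open scoped MatrixOrder in
theorem PosSemidef.exists_eq_conjTranspose_mul_self {A : Matrix n n ℂ} (hA : A.PosSemidef) :
    ∃ B : Matrix n n ℂ, A = Bᴴ * B := by
  classical
  exact CStarAlgebra.nonneg_iff_eq_star_mul_self.mp hA.nonneg

theorem conjTranspose_mul_self_mul_mul_conjTranspose_mul_self_eq_zero {R : Type*}
    [NonUnitalRing R] [PartialOrder R] [StarRing R] [StarOrderedRing R] [NoZeroDivisors R]
    (A : Matrix k m R) (M : Matrix m n R) (B : Matrix l n R) :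
    Aᴴ * A * M * (Bᴴ * B) = 0 ↔ A * M * Bᴴ = 0 := by
  rw [Matrix.mul_assoc, conjTranspose_mul_self_mul_eq_zero, ← Matrix.mul_assoc,
    mul_conjTranspose_mul_self_eq_zero]

theorem trace_conjTranspose_mul_self_mul_mul_eq {R : Type*} [CommRing R] [StarRing R]
    (A : Matrix k m R) (B : Matrix l n R) (M N : Matrix m n R) :
    (Bᴴ * B * Mᴴ * (Aᴴ * A) * N).trace = ((A * M * Bᴴ)ᴴ * (A * N * Bᴴ)).trace := by
  simp only [conjTranspose_mul, conjTranspose_conjTranspose, Matrix.mul_assoc]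
  rw [trace_mul_comm Bᴴ]
  simp only [Matrix.mul_assoc]

theorem im_trace_conjTranspose_mul_self (X : Matrix m n ℂ) : (Xᴴ * X).trace.im = 0 :=
  (Complex.nonneg_iff.mp (posSemidef_conjTranspose_mul_self X).trace_nonneg).2.symm

theorem re_trace_conjTranspose_mul_comm (X Y : Matrix m n ℂ) :
    (Yᴴ * X).trace.re = (Xᴴ * Y).trace.re := by
  rw [← conjTranspose_conjTranspose X, ← conjTranspose_mul, trace_conjTranspose,
    conjTranspose_conjTranspose]
  exact Complex.conj_re _

theorem re_trace_conjTranspose_mul_self_sub_smul (X Y : Matrix m n ℂ) (c : ℝ) :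
    ((X - (c : ℂ) • Y)ᴴ * (X - (c : ℂ) • Y)).trace.re =
      (Xᴴ * X).trace.re - 2 * c * (Xᴴ * Y).trace.re + c ^ 2 * (Yᴴ * Y).trace.re := by
  simp only [conjTranspose_sub, conjTranspose_smul, Complex.star_def, Complex.conj_ofReal,
    Matrix.sub_mul, Matrix.mul_sub, Matrix.smul_mul, Matrix.mul_smul, trace_sub, trace_smul,
    smul_eq_mul, Complex.sub_re, Complex.re_ofReal_mul, re_trace_conjTranspose_mul_comm X Y]
  ring

theorem eq_smul_of_sq_re_trace_eq {X Y : Matrix m n ℂ} (hY : (Yᴴ * Y).trace.re ≠ 0)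
    (h : (Xᴴ * Y).trace.re ^ 2 = (Xᴴ * X).trace.re * (Yᴴ * Y).trace.re) :
    X = (((Xᴴ * Y).trace.re / (Yᴴ * Y).trace.re : ℝ) : ℂ) • Y := by
  rw [← sub_eq_zero, ← trace_conjTranspose_mul_self_eq_zero_iff]
  refine Complex.ext ?_ (im_trace_conjTranspose_mul_self _)
  rw [re_trace_conjTranspose_mul_self_sub_smul, Complex.zero_re]
  field_simp
  linear_combination (-1 : ℝ) * h

theorem exists_real_smul_eq_iff_trace_conjTranspose_mul {X Y : Matrix m n ℂ}
    (hY : (Yᴴ * Y).trace.re ≠ 0) :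
    (∃ c : ℝ, X = (c : ℂ) • Y) ↔
      (Xᴴ * Y).trace.im = 0 ∧
        ‖(Xᴴ * Y).trace‖ ^ 2 = (Xᴴ * X).trace.re * (Yᴴ * Y).trace.re := by
  constructor
  · rintro ⟨c, rfl⟩
    simp only [conjTranspose_smul, Complex.star_def, Complex.conj_ofReal, Matrix.smul_mul,
      Matrix.mul_smul, trace_smul, smul_eq_mul, Complex.re_ofReal_mul, Complex.im_ofReal_mul,
      im_trace_conjTranspose_mul_self, mul_zero, true_and, Complex.sq_norm, Complex.normSq_apply]
    ring
  · rintro ⟨him, hnorm⟩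
    refine ⟨_, eq_smul_of_sq_re_trace_eq hY ?_⟩
    rw [← hnorm, Complex.sq_norm, Complex.normSq_apply, him]
    ring

end Matrix

theorem null_saturation_iff_general
    {n p : ℕ} (ρ P : Matrix (Fin n) (Fin n) ℂ)
    (L : Fin p → Matrix (Fin n) (Fin n) ℂ)
    (hρ : ρ.PosSemidef) (hP : P.PosSemidef)
    (hL : ∀ i, (L i).IsHermitian)
    (hne : ∀ j, (Matrix.trace (ρ * L j * P * L j)).re ≠ 0) :
    (∃ η : Fin p → Fin p → ℝ,
        ∀ i j, P * L i * ρ = (η i j : ℂ) • (P * L j * ρ)) ↔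
    (∀ i j, (Matrix.trace (ρ * L i * P * L j)).im = 0 ∧
        ‖Matrix.trace (ρ * L i * P * L j)‖ ^ 2 =
          (Matrix.trace (ρ * L i * P * L i)).re *
            (Matrix.trace (ρ * L j * P * L j)).re) := by
  obtain ⟨B, rfl⟩ := hρ.exists_eq_conjTranspose_mul_self
  obtain ⟨A, rfl⟩ := hP.exists_eq_conjTranspose_mul_self
  set X := fun k => A * L k * Bᴴ
  have htrace (i j) : (Bᴴ * B * L i * (Aᴴ * A) * L j).trace = ((X i)ᴴ * X j).trace := by
    conv_lhs => rw [← (hL i).eq]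
    exact trace_conjTranspose_mul_self_mul_mul_eq A B (L i) (L j)
  have hsandwich (i j) (c : ℝ) :
      Aᴴ * A * L i * (Bᴴ * B) = (c : ℂ) • (Aᴴ * A * L j * (Bᴴ * B)) ↔ X i = (c : ℂ) • X j := by
    rw [← sub_eq_zero, ← sub_eq_zero (a := X i)]
    convert conjTranspose_mul_self_mul_mul_conjTranspose_mul_self_eq_zero A
      (L i - (c : ℂ) • L j) B using 2 <;>
    simp only [X, Matrix.mul_sub, Matrix.sub_mul, Matrix.mul_smul, Matrix.smul_mul]
  simp only [htrace] at hne ⊢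
  simp only [hsandwich, ← exists_real_smul_eq_iff_trace_conjTranspose_mul (hne _), Classical.skolem]

/-- Saturation condition for a null POVM operator: the proportionality
condition `P Lᵢ ρ = ηᵢⱼ P Lⱼ ρ` with real `ηᵢⱼ` is equivalent to realness plus
equality in the Cauchy–Schwarz inequality for the traces `Tr(ρ Lᵢ P Lⱼ)`. -/
theorem null_saturation_iff
    {n p : ℕ} (ρ P : Matrix (Fin n) (Fin n) ℂ)
    (L : Fin p → Matrix (Fin n) (Fin n) ℂ)
    (hρ : ρ.PosSemidef) (hP : P.PosSemidef)
    (hnull : P * ρ = 0)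
    (hL : ∀ i, (L i).IsHermitian)
    (hne : ∀ j, (Matrix.trace (ρ * L j * P * L j)).re ≠ 0) :
    (∃ η : Fin p → Fin p → ℝ,
        ∀ i j, P * L i * ρ = (η i j : ℂ) • (P * L j * ρ)) ↔
    (∀ i j, (Matrix.trace (ρ * L i * P * L j)).im = 0 ∧
        ‖Matrix.trace (ρ * L i * P * L j)‖ ^ 2 =
          (Matrix.trace (ρ * L i * P * L i)).re *
            (Matrix.trace (ρ * L j * P * L j)).re) :=
  null_saturation_iff_general ρ P L hρ hP hL hne
end
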